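/- arXiv:2006.14309 — 2 statements merged into one kernel-verified Lean document; each statement's English description precedes it below -/
import Mathlib

section
/- Let G be a finite connected simple graph, let T be a spanning tree of G, and let u, v, w be three distinct internal nodes of T that are pairwise adjacent in G and satisfy N_G[u] ⊆ N_G[v] ∪ N_G[w]. Then there exists a transformation from T to a spanning tree T' with in(T') ⊆ in(T) \ {u}, such that every tree S of the sequence satisfies in(S) ⊆ in(T). -/
open SimpleGraph

/-- `T` is a spanning tree of `G`: a subgraph of `G` (on the same vertex set)
that is a tree. Being a tree on the whole vertex type, it contains all vertices. -/
def IsSpanningTree {V : Type*} (G T : SimpleGraph V) : Prop :=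
  T ≤ G ∧ T.IsTree

/-- `T₁` and `T₂` differ by an edge flip: there are edges `e ∈ E(T₁) \ E(T₂)` and
`f ∈ E(T₂) \ E(T₁)` with `E(T₂) = (E(T₁) \ {e}) ∪ {f}`. -/
def EdgeFlip {V : Type*} (T₁ T₂ : SimpleGraph V) : Prop :=
  ∃ e ∈ T₁.edgeSet, e ∉ T₂.edgeSet ∧
    ∃ f ∈ T₂.edgeSet, f ∉ T₁.edgeSet ∧ T₂.edgeSet = (T₁.edgeSet \ {e}) ∪ {f}

/-- The internal nodes of `T`: vertices that are not leaves (a leaf has degree one). -/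
def internalNodes {V : Type*} (T : SimpleGraph V) : Set V :=
  {v | (T.neighborSet v).ncard ≠ 1}

/-- One step of a transformation keeping property `P`: both trees are spanning trees
of `G` satisfying `P`, and they differ by an edge flip. -/
def Step {V : Type*} (G : SimpleGraph V) (P : SimpleGraph V → Prop)
    (T₁ T₂ : SimpleGraph V) : Prop :=
  IsSpanningTree G T₁ ∧ IsSpanningTree G T₂ ∧ P T₁ ∧ P T₂ ∧ EdgeFlip T₁ T₂

/-- There is a transformation from `T₁` to `T₂`: a finite sequence of spanning trees of `G`,
all satisfying `P`, starting at `T₁`, ending at `T₂`, consecutive ones differing by an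
edge flip. -/
def Transformable {V : Type*} (G : SimpleGraph V) (P : SimpleGraph V → Prop)
    (T₁ T₂ : SimpleGraph V) : Prop :=
  Relation.ReflTransGen (Step G P) T₁ T₂

/-!
Induct on the degree of `u` in the current tree. While `u` is internal it has two tree
neighbours, and `v` lies on the far side of at most one of the two tree edges at `u`;
so some tree edge `ux` does not have both `v` and `w` on its far side. If both lie on
the side of `u`, then `x ≠ v, w` is adjacent in `G` to `v` or `w` (by
`N_G[u] ⊆ N_G[v] ∪ N_G[w]`), and `ux` is exchanged for that edge; otherwise `ux`
separates `v` from `w` and is exchanged for `vw`. Either way the degree of `u` drops,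
`x` keeps or loses degree, and only `v` or `w` can become internal.
-/

section

variable {V : Type*}

namespace SimpleGraph

variable {S : SimpleGraph V} {u x y : V}

lemma ncard_neighborSet_eq_ncard_incidenceSet (S : SimpleGraph V) (y : V) :
    (S.neighborSet y).ncard = (S.incidenceSet y).ncard := by
  classical
  exact (Set.ncard_congr' (S.incidenceSetEquivNeighborSet y)).symm

lemma Preconnected.nonempty_neighborSet [Nontrivial V] (hS : S.Preconnected) (u : V) :
    (S.neighborSet u).Nonempty :=
  (mem_support S).mp (hS.support_eq_univ ▸ Set.mem_univ u)

lemma IsAcyclic.not_reachable_deleteEdges (hS : S.IsAcyclic) (hux : S.Adj u x) :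
    ¬ (S.deleteEdges {s(u, x)}).Reachable u x :=
  isAcyclic_iff_forall_adj_isBridge.mp hS hux

lemma IsTree.reachable_deleteEdges_or (hS : S.IsTree) (hux : S.Adj u x) (y : V) :
    (S.deleteEdges {s(u, x)}).Reachable u y ∨ (S.deleteEdges {s(u, x)}).Reachable x y := by
  classical
  by_contra! h
  obtain ⟨p⟩ := hS.connected.preconnected u y
  exact h.1 (reachable_deleteEdges_iff_exists_walk.mpr ⟨p.toPath,
    p.toPath.2.isTrail.not_mem_edges_of_not_reachable (hS.isAcyclic.not_reachable_deleteEdges hux)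
      fun h' => h.2 h'.symm⟩)

/-- A path on the far side of `ux` never passes through `u`. -/
lemma IsAcyclic.reachable_deleteEdges_of_reachable_deleteEdges (hS : S.IsAcyclic)
    (hux : S.Adj u x) (h : (S.deleteEdges {s(u, x)}).Reachable x y) (x' : V) :
    (S.deleteEdges {s(u, x')}).Reachable x y := by
  classical
  let p := (h.mono (deleteEdges_le _)).some.toPath
  have hswap : S.deleteEdges {s(x, u)} = S.deleteEdges {s(u, x)} := by rw [Sym2.eq_swap]
  have hxu : ¬ (S.deleteEdges {s(x, u)}).Reachable x u := by
    rw [hswap]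
    exact fun h' => hS.not_reachable_deleteEdges hux h'.symm
  have hyu : ¬ (S.deleteEdges {s(x, u)}).Reachable y u := by
    rw [hswap]
    exact fun h' => hS.not_reachable_deleteEdges hux (h.trans h').symm
  have hu : u ∉ p.1.support := p.2.isTrail.not_mem_support_of_not_reachable hxu hyu
  exact reachable_deleteEdges_iff_exists_walk.mpr
    ⟨p, fun he => hu (p.1.fst_mem_support_of_mem_edges he)⟩

lemma IsAcyclic.eq_of_reachable_deleteEdges (hS : S.IsAcyclic) {x₁ x₂ : V}
    (h₁ : S.Adj u x₁) (h₂ : S.Adj u x₂) (hy₁ : (S.deleteEdges {s(u, x₁)}).Reachable x₁ y)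
    (hy₂ : (S.deleteEdges {s(u, x₂)}).Reachable x₂ y) : x₁ = x₂ := by
  by_contra hne
  have hadj : (S.deleteEdges {s(u, x₁)}).Adj u x₂ :=
    deleteEdges_adj.mpr ⟨h₂, by simp [Ne.symm hne, h₂.ne']⟩
  exact hS.not_reachable_deleteEdges h₁ <| hadj.reachable.trans <|
    (hS.reachable_deleteEdges_of_reachable_deleteEdges h₂ hy₂ x₁).trans hy₁.symm

end SimpleGraph

def IsEdgeExchange (S S' : SimpleGraph V) (e f : Sym2 V) : Prop :=
  e ∈ S.edgeSet ∧ f ∉ S.edgeSet ∧ S'.edgeSet = (S.edgeSet \ {e}) ∪ {f}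

namespace IsEdgeExchange

variable {S S' : SimpleGraph V} {e f : Sym2 V} {y : V}

lemma edgeFlip (h : IsEdgeExchange S S' e f) : EdgeFlip S S' := by
  obtain ⟨he, hf, hS'⟩ := h
  refine ⟨e, he, ?_, f, by simp [hS'], hf, hS'⟩
  rw [hS']
  rintro (⟨-, he'⟩ | rfl)
  exacts [he' rfl, hf he]

lemma incidenceSet_of_notMem (h : IsEdgeExchange S S' e f) (hy : y ∉ f) :
    S'.incidenceSet y = S.incidenceSet y \ {e} := by
  ext g
  simp [incidenceSet, h.2.2]
  grind

lemma incidenceSet_of_mem (h : IsEdgeExchange S S' e f) (hy : y ∈ f) :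
    S'.incidenceSet y = insert f (S.incidenceSet y \ {e}) := by
  ext g
  simp [incidenceSet, h.2.2]
  grind

lemma internalNodes_subset [Finite V] [Nontrivial V] (h : IsEdgeExchange S S' e f)
    (hS' : S'.Preconnected) : internalNodes S' ⊆ internalNodes S ∪ {y | y ∈ f ∧ y ∉ e} := by
  intro y hy
  rw [Set.mem_union, or_iff_not_imp_left]
  intro hyS
  simp only [internalNodes, Set.mem_ofPred_eq, not_not,
    ncard_neighborSet_eq_ncard_incidenceSet] at hy hyS
  by_cases hyf : y ∈ f
  · refine ⟨hyf, fun hye => hy ?_⟩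
    have he : e ∈ S.incidenceSet y := ⟨h.1, hye⟩
    have hf : f ∉ S.incidenceSet y \ {e} := fun hf => h.2.1 hf.1.1
    rw [h.incidenceSet_of_mem hyf, Set.ncard_insert_of_notMem hf,
      Set.ncard_sdiff_singleton_add_one he, hyS]
  · have hpos : 0 < (S'.incidenceSet y).ncard := by
      rw [← ncard_neighborSet_eq_ncard_incidenceSet, Set.ncard_pos]
      exact hS'.nonempty_neighborSet y
    rw [h.incidenceSet_of_notMem hyf] at hpos hy
    have := Set.ncard_le_ncard (Set.sdiff_subset : S.incidenceSet y \ {e} ⊆ _)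
    omega

lemma ncard_neighborSet_lt [Finite V] (h : IsEdgeExchange S S' e f) (hye : y ∈ e)
    (hyf : y ∉ f) : (S'.neighborSet y).ncard < (S.neighborSet y).ncard := by
  simp only [ncard_neighborSet_eq_ncard_incidenceSet, h.incidenceSet_of_notMem hyf]
  exact Set.ncard_sdiff_singleton_lt_of_mem ⟨h.1, hye⟩

end IsEdgeExchange

namespace SimpleGraph

variable {S : SimpleGraph V} {a b c d : V}

lemma IsAcyclic.not_reachable_of_reachable_deleteEdges (hS : S.IsAcyclic) (hab : S.Adj a b)
    (hac : (S.deleteEdges {s(a, b)}).Reachable a c)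
    (hbd : (S.deleteEdges {s(a, b)}).Reachable b d) :
    ¬ (S.deleteEdges {s(a, b)}).Reachable c d :=
  fun hcd => hS.not_reachable_deleteEdges hab (hac.trans (hcd.trans hbd.symm))

lemma IsAcyclic.isEdgeExchange_deleteEdges_sup_edge (hS : S.IsAcyclic) (hab : S.Adj a b)
    (hac : (S.deleteEdges {s(a, b)}).Reachable a c)
    (hbd : (S.deleteEdges {s(a, b)}).Reachable b d) (hne : s(c, d) ≠ s(a, b)) :
    IsEdgeExchange S (S.deleteEdges {s(a, b)} ⊔ edge c d) s(a, b) s(c, d) := by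
  have hK := hS.not_reachable_of_reachable_deleteEdges hab hac hbd
  have hcd : c ≠ d := by rintro rfl; exact hK .rfl
  refine ⟨hab, fun hmem => hK (deleteEdges_adj.mpr ⟨hmem, hne⟩).reachable, ?_⟩
  rw [edgeSet_sup, edgeSet_deleteEdges, edgeSet_edge_of_ne hcd]

lemma IsTree.deleteEdges_sup_edge (hS : S.IsTree) (hab : S.Adj a b)
    (hac : (S.deleteEdges {s(a, b)}).Reachable a c)
    (hbd : (S.deleteEdges {s(a, b)}).Reachable b d) :
    (S.deleteEdges {s(a, b)} ⊔ edge c d).IsTree := by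
  have hK := hS.isAcyclic.not_reachable_of_reachable_deleteEdges hab hac hbd
  have hcd : c ≠ d := by rintro rfl; exact hK .rfl
  refine ⟨?_, (hS.isAcyclic.anti (deleteEdges_le _)).sup_edge_of_not_reachable hK⟩
  have hab' : (S.deleteEdges {s(a, b)} ⊔ edge c d).Reachable a b :=
    (hac.mono le_sup_left).trans <|
      (Adj.reachable (Or.inr ((edge_adj ..).mpr ⟨Or.inl ⟨rfl, rfl⟩, hcd⟩))).trans
        (hbd.mono le_sup_left).symm
  refine (connected_iff_exists_forall_reachable _).mpr ⟨a, fun y => ?_⟩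
  rcases hS.reachable_deleteEdges_or hab y with h | h
  exacts [h.mono le_sup_left, hab'.trans (h.mono le_sup_left)]

end SimpleGraph

section Exchange

variable [Finite V] {G S : SimpleGraph V}

lemma IsSpanningTree.exists_edgeFlip_of_reachable_deleteEdges (hS : IsSpanningTree G S)
    {u x c d : V} (hux : S.Adj u x) (hcd : G.Adj c d)
    (hc : (S.deleteEdges {s(u, x)}).Reachable u c)
    (hd : (S.deleteEdges {s(u, x)}).Reachable x d) (hcu : c ≠ u) :
    ∃ S', IsSpanningTree G S' ∧ EdgeFlip S S' ∧
      internalNodes S' ⊆ internalNodes S ∪ {y | y ∈ s(c, d) ∧ y ∉ s(u, x)} ∧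
      (S'.neighborSet u).ncard < (S.neighborSet u).ncard := by
  have := nontrivial_of_ne u x hux.ne
  have hbridge := hS.2.isAcyclic.not_reachable_deleteEdges hux
  have hcx : c ≠ x := by rintro rfl; exact hbridge hc
  have hdu : d ≠ u := by rintro rfl; exact hbridge hd.symm
  have hne : s(c, d) ≠ s(u, x) := by simp [hcu, hcx]
  have hT := hS.2.deleteEdges_sup_edge hux hc hd
  have hX := hS.2.isAcyclic.isEdgeExchange_deleteEdges_sup_edge hux hc hd hne
  refine ⟨_, ⟨sup_le ((deleteEdges_le _).trans hS.1) ((edge_le_iff G).mpr (.inr hcd)), hT⟩,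
    hX.edgeFlip, hX.internalNodes_subset hT.connected.preconnected,
    hX.ncard_neighborSet_lt (Sym2.mem_mk_left u x) ?_⟩
  simp [Sym2.mem_iff, hcu.symm, hdu.symm]

lemma IsSpanningTree.exists_edgeFlip_of_closedNeighborSet_subset (hS : IsSpanningTree G S)
    {u v w x₁ x₂ : V} (huv : u ≠ v) (huw : u ≠ w) (hvw : G.Adj v w)
    (hnbr : insert u (G.neighborSet u) ⊆
      insert v (G.neighborSet v) ∪ insert w (G.neighborSet w))
    (hx₁ : S.Adj u x₁) (hx₂ : S.Adj u x₂) (hx₁₂ : x₁ ≠ x₂) :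
    ∃ S', IsSpanningTree G S' ∧ EdgeFlip S S' ∧
      internalNodes S' ⊆ internalNodes S ∪ {v, w} ∧
      (S'.neighborSet u).ncard < (S.neighborSet u).ncard := by
  obtain ⟨x, hux, hx⟩ : ∃ x, S.Adj u x ∧ ¬ ((S.deleteEdges {s(u, x)}).Reachable x v ∧
      (S.deleteEdges {s(u, x)}).Reachable x w) := by
    by_contra! h
    exact hx₁₂ (hS.2.isAcyclic.eq_of_reachable_deleteEdges hx₁ hx₂ (h x₁ hx₁).1 (h x₂ hx₂).1)
  have hbridge := hS.2.isAcyclic.not_reachable_deleteEdges hux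
  rcases hS.2.reachable_deleteEdges_or hux v with hv | hv <;>
    rcases hS.2.reachable_deleteEdges_or hux w with hw | hw
  · obtain ⟨z, hz, hzx, huz⟩ : ∃ z ∈ ({v, w} : Set V), G.Adj z x ∧
        (S.deleteEdges {s(u, x)}).Reachable u z := by
      rcases hnbr (Set.mem_insert_of_mem u (hS.1 hux)) with (rfl | hvx) | (rfl | hwx)
      · exact absurd hv hbridge
      · exact ⟨v, by simp, hvx, hv⟩
      · exact absurd hw hbridge
      · exact ⟨w, by simp, hwx, hw⟩
    have hzu : z ≠ u := by rintro rfl; simp_all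
    obtain ⟨S', hS', hflip, hin, hlt⟩ :=
      hS.exists_edgeFlip_of_reachable_deleteEdges hux hzx huz .rfl hzu
    refine ⟨S', hS', hflip, hin.trans (Set.union_subset_union_right _ ?_), hlt⟩
    rintro y ⟨hy, hyx⟩
    rcases Sym2.mem_iff.mp hy with rfl | rfl
    exacts [hz, absurd (Sym2.mem_mk_right u y) hyx]
  · obtain ⟨S', hS', hflip, hin, hlt⟩ :=
      hS.exists_edgeFlip_of_reachable_deleteEdges hux hvw hv hw huv.symm
    exact ⟨S', hS', hflip, hin.trans (Set.union_subset_union_right _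
      fun y hy => Sym2.mem_iff.mp hy.1), hlt⟩
  · obtain ⟨S', hS', hflip, hin, hlt⟩ :=
      hS.exists_edgeFlip_of_reachable_deleteEdges hux hvw.symm hw hv huw.symm
    exact ⟨S', hS', hflip, hin.trans (Set.union_subset_union_right _
      fun y hy => (Sym2.mem_iff.mp hy.1).symm), hlt⟩
  · exact absurd ⟨hv, hw⟩ hx

end Exchange

lemma exists_adj_adj_ne_of_mem_internalNodes [Finite V] [Nontrivial V] {S : SimpleGraph V}
    (hS : S.Preconnected) {u : V} (hu : u ∈ internalNodes S) :
    ∃ x₁ x₂, S.Adj u x₁ ∧ S.Adj u x₂ ∧ x₁ ≠ x₂ := by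
  have hne : (S.neighborSet u).ncard ≠ 1 := hu
  have hpos := (Set.ncard_pos (Set.toFinite _)).mpr (hS.nonempty_neighborSet u)
  exact (Set.one_lt_ncard_iff (s := S.neighborSet u) (Set.toFinite _)).mp (by omega)

theorem IsSpanningTree.exists_transformable_of_closedNeighborSet_subset [Finite V]
    {G S : SimpleGraph V} {I : Set V} (hS : IsSpanningTree G S) (hSI : internalNodes S ⊆ I)
    {u v w : V} (huv : u ≠ v) (huw : u ≠ w) (hvw : G.Adj v w) (hv : v ∈ I) (hw : w ∈ I)
    (hnbr : insert u (G.neighborSet u) ⊆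
      insert v (G.neighborSet v) ∪ insert w (G.neighborSet w)) :
    ∃ T', IsSpanningTree G T' ∧ internalNodes T' ⊆ I \ {u} ∧
      Transformable G (fun S => internalNodes S ⊆ I) S T' := by
  have := nontrivial_of_ne u v huv
  induction hn : (S.neighborSet u).ncard using Nat.strong_induction_on generalizing S with
  | _ n ih =>
  by_cases hu : u ∈ internalNodes S
  · obtain ⟨x₁, x₂, hx₁, hx₂, hx₁₂⟩ :=
      exists_adj_adj_ne_of_mem_internalNodes hS.2.connected.preconnected hu
    obtain ⟨S', hS', hflip, hin, hlt⟩ :=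
      hS.exists_edgeFlip_of_closedNeighborSet_subset huv huw hvw hnbr hx₁ hx₂ hx₁₂
    have hS'I : internalNodes S' ⊆ I :=
      hin.trans (Set.union_subset hSI (Set.insert_subset hv (Set.singleton_subset_iff.mpr hw)))
    obtain ⟨T', hT', hT'I, htrans⟩ := ih _ (hn ▸ hlt) hS' hS'I rfl
    exact ⟨T', hT', hT'I, .head ⟨hS, hS', hSI, hS'I, hflip⟩ htrans⟩
  · exact ⟨S, hS, fun y hy => ⟨hSI hy, by rintro rfl; exact hu hy⟩, .refl⟩

end

theorem remove_doubly_dominated_internal_node_general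
    {V : Type*} [Fintype V] (G : SimpleGraph V)
    (T : SimpleGraph V) (hT : IsSpanningTree G T)
    (u v w : V) (huv : u ≠ v) (huw : u ≠ w)
    (hadj₃ : G.Adj v w)
    (hv : v ∈ internalNodes T) (hw : w ∈ internalNodes T)
    (hnbr : insert u (G.neighborSet u) ⊆
      insert v (G.neighborSet v) ∪ insert w (G.neighborSet w)) :
    ∃ T' : SimpleGraph V, IsSpanningTree G T' ∧
      internalNodes T' ⊆ internalNodes T \ {u} ∧
      Transformable G (fun S => internalNodes S ⊆ internalNodes T) T T' :=
  hT.exists_transformable_of_closedNeighborSet_subset le_rfl huv huw hadj₃ hv hw hnbr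

/-- If `u`, `v`, `w` are three distinct, pairwise adjacent internal nodes of a spanning
tree `T` with `N_G[u] ⊆ N_G[v] ∪ N_G[w]`, then `T` can be transformed, never creating a
new internal node, into a spanning tree `T'` with `in(T') ⊆ in(T) \ {u}`. -/
theorem remove_doubly_dominated_internal_node
    {V : Type*} [Fintype V] (G : SimpleGraph V) (hG : G.Connected)
    (T : SimpleGraph V) (hT : IsSpanningTree G T)
    (u v w : V) (huv : u ≠ v) (huw : u ≠ w) (hvw : v ≠ w)
    (hadj₁ : G.Adj u v) (hadj₂ : G.Adj u w) (hadj₃ : G.Adj v w)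
    (hu : u ∈ internalNodes T) (hv : v ∈ internalNodes T) (hw : w ∈ internalNodes T)
    (hnbr : insert u (G.neighborSet u) ⊆
      insert v (G.neighborSet v) ∪ insert w (G.neighborSet w)) :
    ∃ T' : SimpleGraph V, IsSpanningTree G T' ∧
      internalNodes T' ⊆ internalNodes T \ {u} ∧
      Transformable G (fun S => internalNodes S ⊆ internalNodes T) T T' :=
  remove_doubly_dominated_internal_node_general G T hT u v w huv huw hadj₃ hv hw hnbr
end

section
/- Let G be a finite simple graph with vertex set {v₁, …, v_n} (n ≥ 1) and let G' be the graph on vertex set A ∪ B ∪ {x, y}, where A = {a₁, …, a_n}, B = {b_{i,t} : 1 ≤ i ≤ n, t ∈ {0,1}}, with edges: a_i is adjacent to b_{j,t} (for t ∈ {0,1}) if and only if v_j ∈ N_G[v_i]; x is adjacent to every vertex of A; and x is adjacent to y. Then for every spanning tree T of G', there exists a transformation from T to a spanning tree T_A with in(T_A) ⊆ in(T) ∩ (A ∪ {x}), such that every tree S of the sequence satisfies in(S) ⊆ in(T). -/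
/-!
While some vertex `b` of `B` is internal in the current tree `S`, pick a neighbour `aᵢ` of `b`
(every neighbour of `b` lies in `A`) that is not on the path from `b` to `x`; one exists because
`b` has degree at least two. Replacing the edge `b aᵢ` by `aᵢ x` yields a spanning tree in which
`aᵢ` keeps its degree, `b` loses one and only `x` gains one. Since `y` is a pendant vertex at `x`
and `A` is nonempty, `x` is always internal, so no new internal node appears. Each flip increases
the number of tree edges at `x`, so the process stops, and then the internal nodes lie in
`A ∪ {x}` because `y` is always a leaf.
-/

open SimpleGraph

/-- The graph `G'` built from `G`: vertex set `A ∪ B ∪ {x, y}` where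
`A = {aᵢ : i ∈ V}` is encoded as `Sum.inl i`, `B = {b_{j,t}}` as
`Sum.inr (Sum.inl (j, t))`, `x` as `Sum.inr (Sum.inr false)` and
`y` as `Sum.inr (Sum.inr true)`. The vertex `aᵢ` is adjacent to `b_{j,t}`
iff `v_j ∈ N_G[v_i]`, `x` is adjacent to every vertex of `A`, and `x` is
adjacent to `y`. -/
def Gprime {V : Type*} (G : SimpleGraph V) :
    SimpleGraph (V ⊕ (V × Bool) ⊕ Bool) :=
  SimpleGraph.fromRel (fun u w =>
    match u, w with
    | Sum.inl i, Sum.inr (Sum.inl (j, _)) => i = j ∨ G.Adj i j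
    | Sum.inl _, Sum.inr (Sum.inr b) => b = false
    | Sum.inr (Sum.inr false), Sum.inr (Sum.inr true) => True
    | _, _ => False)

namespace SimpleGraph

variable {W : Type*} {S : SimpleGraph W} {u v w : W}

def rotateEdge (S : SimpleGraph W) (u v w : W) : SimpleGraph W :=
  S.deleteEdges {s(u, v)} ⊔ edge v w

lemma rotateEdge_adj {a b : W} :
    (S.rotateEdge u v w).Adj a b ↔
      (S.Adj a b ∧ s(a, b) ≠ s(u, v)) ∨ s(a, b) = s(v, w) ∧ a ≠ b := by
  simp [rotateEdge, adj_edge, eq_comm]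

lemma exists_adj_reachable_deleteEdges (hu : 1 < (S.neighborSet u).ncard)
    (huw : S.Reachable u w) : ∃ v, S.Adj u v ∧ (S.deleteEdges {s(u, v)}).Reachable u w := by
  obtain ⟨p, hp⟩ := huw.exists_isPath
  cases p with
  | nil =>
    obtain ⟨v, hv⟩ := Set.nonempty_of_ncard_ne_zero (s := S.neighborSet u) (by omega)
    exact ⟨v, hv, .rfl⟩
  | @cons _ a _ hua q =>
    obtain ⟨v, huv, hva⟩ := Set.exists_ne_of_one_lt_ncard hu a
    refine ⟨v, huv, ⟨(q.cons hua).toDeleteEdges {s(u, v)} ?_⟩⟩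
    rintro e he rfl
    rw [Walk.edges_cons, List.mem_cons] at he
    rcases he with he | he
    · exact hva (by simpa [huv.ne.symm] using he)
    · exact ((Walk.cons_isPath_iff _ _).mp hp).2 (q.fst_mem_support_of_mem_edges he)


lemma IsTree.not_reachable_deleteEdges (hS : S.IsTree) (huv : S.Adj u v)
    (hreach : (S.deleteEdges {s(u, v)}).Reachable u w) :
    ¬(S.deleteEdges {s(u, v)}).Reachable v w := fun hvw =>
  isAcyclic_iff_forall_adj_isBridge.mp hS.isAcyclic huv (hreach.trans hvw.symm)

lemma IsTree.ne_of_reachable_deleteEdges (hS : S.IsTree) (huv : S.Adj u v)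
    (hreach : (S.deleteEdges {s(u, v)}).Reachable u w) : v ≠ w := by
  rintro rfl
  exact hS.not_reachable_deleteEdges huv hreach .rfl

lemma IsTree.not_adj_of_reachable_deleteEdges (hS : S.IsTree) (huv : S.Adj u v)
    (hreach : (S.deleteEdges {s(u, v)}).Reachable u w) (huw : u ≠ w) : ¬S.Adj v w := by
  intro hvw
  refine hS.not_reachable_deleteEdges huv hreach (Adj.reachable ?_)
  simp [hvw, huw.symm, huv.ne.symm]

lemma IsTree.rotateEdge (hS : S.IsTree) (huv : S.Adj u v)
    (hreach : (S.deleteEdges {s(u, v)}).Reachable u w) : (S.rotateEdge u v w).IsTree := by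
  have hvw := hS.ne_of_reachable_deleteEdges huv hreach
  have hreach_uv : (S.rotateEdge u v w).Reachable u v :=
    (hreach.mono le_sup_left).trans
      (rotateEdge_adj.mpr (.inr ⟨Sym2.eq_swap, hvw.symm⟩)).reachable
  have hpre : ∀ a b, S.Reachable a b → (S.rotateEdge u v w).Reachable a b := by
    intro a b hab
    rw [reachable_iff_reflTransGen] at hab
    refine (reachable_iff_reflTransGen _ _).mpr (hab.lift' id fun a b hab => ?_)
    change Relation.ReflTransGen _ a b
    rw [← reachable_iff_reflTransGen]
    by_cases he : s(a, b) = s(u, v)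
    · rcases Sym2.eq_iff.mp he with ⟨rfl, rfl⟩ | ⟨rfl, rfl⟩
      exacts [hreach_uv, hreach_uv.symm]
    · exact Adj.reachable (rotateEdge_adj.mpr (.inl ⟨hab, he⟩))
  have : Nonempty W := ⟨u⟩
  refine ⟨⟨fun a b => hpre a b (hS.connected.preconnected a b)⟩, ?_⟩
  exact (hS.isAcyclic.anti (deleteEdges_le _)).sup_edge_of_not_reachable
    (hS.not_reachable_deleteEdges huv hreach)

lemma edgeSet_rotateEdge (hvw : v ≠ w) :
    (S.rotateEdge u v w).edgeSet = (S.edgeSet \ {s(u, v)}) ∪ {s(v, w)} := by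
  rw [rotateEdge, edgeSet_sup, edgeSet_deleteEdges, edgeSet_edge_of_ne hvw]

lemma IsTree.edgeFlip_rotateEdge (hS : S.IsTree) (huv : S.Adj u v)
    (hreach : (S.deleteEdges {s(u, v)}).Reachable u w) (huw : u ≠ w) :
    EdgeFlip S (S.rotateEdge u v w) := by
  have hvw := hS.ne_of_reachable_deleteEdges huv hreach
  have hef : s(u, v) ≠ s(v, w) := by simp [huv.ne, huw]
  refine ⟨s(u, v), huv, ?_, s(v, w), ?_, hS.not_adj_of_reachable_deleteEdges huv hreach huw,
    edgeSet_rotateEdge hvw⟩ <;> simp [edgeSet_rotateEdge hvw, hef]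

lemma neighborSet_rotateEdge_of_ne {a : W} (hau : a ≠ u) (hav : a ≠ v) (haw : a ≠ w) :
    (S.rotateEdge u v w).neighborSet a = S.neighborSet a := by
  ext b
  simp [rotateEdge_adj, hau, hav, haw]

lemma neighborSet_rotateEdge_pivot (huv : u ≠ v) (hvw : v ≠ w) :
    (S.rotateEdge u v w).neighborSet v = insert w (S.neighborSet v \ {u}) := by
  ext b
  simp only [mem_neighborSet, rotateEdge_adj, Sym2.eq_iff, Set.mem_insert_iff, Set.mem_sdiff,
    Set.mem_singleton_iff]
  grind

lemma IsTree.internalNodes_rotateEdge_subset (hS : S.IsTree) (huv : S.Adj u v)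
    (hreach : (S.deleteEdges {s(u, v)}).Reachable u w) (huw : u ≠ w)
    (hu : u ∈ internalNodes S) (hw : w ∈ internalNodes S) :
    internalNodes (S.rotateEdge u v w) ⊆ internalNodes S := by
  have hvw := hS.ne_of_reachable_deleteEdges huv hreach
  intro a ha
  by_cases hau : a = u
  · exact hau ▸ hu
  by_cases haw : a = w
  · exact haw ▸ hw
  by_cases hav : a = v
  · subst hav
    have hw_notMem : w ∉ S.neighborSet a := hS.not_adj_of_reachable_deleteEdges huv hreach huw
    have hcard := Set.ncard_exchange hw_notMem (show u ∈ S.neighborSet a from huv.symm)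
    rwa [internalNodes, Set.mem_ofPred, neighborSet_rotateEdge_pivot huv.ne hvw, hcard] at ha
  · rwa [internalNodes, Set.mem_ofPred, neighborSet_rotateEdge_of_ne hau hav haw] at ha

lemma ncard_edgeSet_rotateEdge_lt [Finite W] (huv : S.Adj u v) (huw : u ≠ w) (hvw : v ≠ w) :
    ((S.rotateEdge u v w).edgeSet \ {e | w ∈ e}).ncard < (S.edgeSet \ {e | w ∈ e}).ncard := by
  have hrot : (S.rotateEdge u v w).edgeSet \ {e | w ∈ e} =
      (S.edgeSet \ {e | w ∈ e}) \ {s(u, v)} := by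
    ext e
    simp only [edgeSet_rotateEdge hvw, Set.mem_sdiff, Set.mem_union, Set.mem_singleton_iff,
      Set.mem_ofPred]
    grind [Sym2.mem_mk_right]
  rw [hrot]
  exact Set.ncard_sdiff_singleton_lt_of_mem ⟨huv, by simp [huw.symm, hvw.symm]⟩

section Pendant

variable {x y : W}

lemma Connected.adj_of_forall_adj_eq (hS : S.Connected) (hy : ∀ z, S.Adj y z → z = x)
    (hxy : x ≠ y) : S.Adj y x := by
  obtain ⟨p⟩ := hS.preconnected y x
  cases p with
  | nil => exact absurd rfl hxy
  | cons h _ => exact hy _ h ▸ h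

lemma Connected.mem_internalNodes_of_pendant (hS : S.Connected) (hxy : S.Adj x y)
    (hy : ∀ z, S.Adj y z → z = x) {c : W} (hcx : c ≠ x) (hcy : c ≠ y) :
    x ∈ internalNodes S := by
  intro hx
  have hNx : S.neighborSet x = {y} := by
    obtain ⟨z, hz⟩ := Set.ncard_eq_one.mp hx
    have hyz : y = z := by rw [← Set.mem_singleton_iff, ← hz]; exact hxy
    rw [hz, hyz]
  have hclosed : ∀ z, S.Reachable x z → z = x ∨ z = y := by
    intro z hz
    rw [reachable_iff_reflTransGen] at hz
    induction hz with
    | refl => exact .inl rfl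
    | tail _ hab ih =>
      rcases ih with rfl | rfl
      · exact .inr (Set.eq_of_mem_singleton (hNx ▸ hab))
      · exact .inl (hy _ hab)
  rcases hclosed c (hS.preconnected x c) with h | h
  exacts [hcx h, hcy h]

end Pendant

end SimpleGraph

namespace Gprime

-- Names: `hub` is `x = Sum.inr (Sum.inr false)`, `pendant` is `y = Sum.inr (Sum.inr true)`.

variable {V : Type*} (G : SimpleGraph V)

lemma adj_inl_hub (i : V) : (Gprime G).Adj (Sum.inl i) (Sum.inr (Sum.inr false)) := by
  simp [Gprime]

lemma adj_pendant_iff (w : V ⊕ (V × Bool) ⊕ Bool) :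
    (Gprime G).Adj (Sum.inr (Sum.inr true)) w ↔ w = Sum.inr (Sum.inr false) := by
  rcases w with i | q | (_ | _) <;> simp [Gprime]

lemma exists_eq_inl_of_adj_inr_inl {q : V × Bool} {w : V ⊕ (V × Bool) ⊕ Bool}
    (h : (Gprime G).Adj (Sum.inr (Sum.inl q)) w) : ∃ i, w = Sum.inl i := by
  rcases w with i | q' | (_ | _) <;> simp_all [Gprime]

end Gprime

namespace IsSpanningTree

variable {V : Type*} {G : SimpleGraph V} {S : SimpleGraph (V ⊕ (V × Bool) ⊕ Bool)}

lemma adj_pendant_iff (hS : IsSpanningTree (Gprime G) S) (w : V ⊕ (V × Bool) ⊕ Bool) :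
    S.Adj (Sum.inr (Sum.inr true)) w ↔ w = Sum.inr (Sum.inr false) := by
  refine ⟨fun h => (Gprime.adj_pendant_iff G w).mp (hS.1 h), ?_⟩
  rintro rfl
  exact hS.2.connected.adj_of_forall_adj_eq (fun z h => (Gprime.adj_pendant_iff G z).mp (hS.1 h))
    (by simp)

lemma pendant_notMem_internalNodes (hS : IsSpanningTree (Gprime G) S) :
    Sum.inr (Sum.inr true) ∉ internalNodes S := by
  intro h
  refine h (Set.ncard_eq_one.mpr ⟨Sum.inr (Sum.inr false), ?_⟩)
  ext w
  exact hS.adj_pendant_iff w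

lemma hub_mem_internalNodes [Nonempty V] (hS : IsSpanningTree (Gprime G) S) :
    Sum.inr (Sum.inr false) ∈ internalNodes S := by
  obtain ⟨i⟩ := ‹Nonempty V›
  exact hS.2.connected.mem_internalNodes_of_pendant ((hS.adj_pendant_iff _).mpr rfl).symm
    (fun z h => (hS.adj_pendant_iff z).mp h) (c := Sum.inl i) (by simp) (by simp)

lemma internalNodes_subset_of_forall_inr_inl_notMem (hS : IsSpanningTree (Gprime G) S)
    (hB : ∀ q, Sum.inr (Sum.inl q) ∉ internalNodes S) :
    internalNodes S ⊆ Set.range Sum.inl ∪ {Sum.inr (Sum.inr false)} := by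
  rintro (i | q | (_ | _)) hv
  · exact .inl ⟨i, rfl⟩
  · exact absurd hv (hB q)
  · exact .inr rfl
  · exact absurd hv hS.pendant_notMem_internalNodes

lemma exists_rotateEdge [Finite V] [Nonempty V] (hS : IsSpanningTree (Gprime G) S)
    {q : V × Bool} (hq : Sum.inr (Sum.inl q) ∈ internalNodes S) :
    ∃ S', IsSpanningTree (Gprime G) S' ∧ internalNodes S' ⊆ internalNodes S ∧ EdgeFlip S S' ∧
      (S'.edgeSet \ {e | Sum.inr (Sum.inr false) ∈ e}).ncard <
        (S.edgeSet \ {e | Sum.inr (Sum.inr false) ∈ e}).ncard := by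
  have hdeg : 1 < (S.neighborSet (Sum.inr (Sum.inl q))).ncard := by
    have : Nontrivial (V ⊕ (V × Bool) ⊕ Bool) :=
      nontrivial_of_ne (Sum.inr (Sum.inl q)) (Sum.inr (Sum.inr false)) (by simp)
    have : 0 < (S.neighborSet (Sum.inr (Sum.inl q))).ncard :=
      (Set.ncard_pos (Set.toFinite _)).mpr
        (hS.2.connected.preconnected.exists_adj_of_nontrivial _)
    have : _ ≠ 1 := hq
    omega
  obtain ⟨a, hqa, hreach⟩ := exists_adj_reachable_deleteEdges hdeg
    (hS.2.connected.preconnected _ (Sum.inr (Sum.inr false)))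
  obtain ⟨i, rfl⟩ := Gprime.exists_eq_inl_of_adj_inr_inl G (hS.1 hqa)
  have hle : S.rotateEdge (Sum.inr (Sum.inl q)) (Sum.inl i) (Sum.inr (Sum.inr false)) ≤ Gprime G :=
    sup_le ((deleteEdges_le _).trans hS.1) ((edge_le_iff (G := Gprime G)).mpr
      (.inr (Gprime.adj_inl_hub G i)))
  exact ⟨_, ⟨hle, hS.2.rotateEdge hqa hreach⟩,
    hS.2.internalNodes_rotateEdge_subset hqa hreach (by simp) hq hS.hub_mem_internalNodes,
    hS.2.edgeFlip_rotateEdge hqa hreach (by simp),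
    ncard_edgeSet_rotateEdge_lt hqa (by simp) (by simp)⟩

lemma exists_transformable [Finite V] [Nonempty V] (hS : IsSpanningTree (Gprime G) S)
    {I : Set (V ⊕ (V × Bool) ⊕ Bool)} (hSI : internalNodes S ⊆ I) :
    ∃ TA, IsSpanningTree (Gprime G) TA ∧
      internalNodes TA ⊆ I ∩ (Set.range Sum.inl ∪ {Sum.inr (Sum.inr false)}) ∧
      Transformable (Gprime G) (fun S => internalNodes S ⊆ I) S TA := by
  induction hm : (S.edgeSet \ {e | Sum.inr (Sum.inr false) ∈ e}).ncard
    using Nat.strong_induction_on generalizing S with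
  | _ n ih =>
  by_cases hB : ∃ q, Sum.inr (Sum.inl q) ∈ internalNodes S
  · obtain ⟨q, hq⟩ := hB
    obtain ⟨S', hS', hsub, hflip, hlt⟩ := hS.exists_rotateEdge hq
    obtain ⟨TA, hTA, hTAI, htrans⟩ := ih _ (hm ▸ hlt) hS' (hsub.trans hSI) rfl
    exact ⟨TA, hTA, hTAI, .head ⟨hS, hS', hSI, hsub.trans hSI, hflip⟩ htrans⟩
  · push Not at hB
    exact ⟨S, hS, fun v hv => ⟨hSI hv, hS.internalNodes_subset_of_forall_inr_inl_notMem hB hv⟩,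
      .refl⟩

end IsSpanningTree

/-- Every spanning tree `T` of `G'` can be transformed, never creating a new internal
node, into a spanning tree `T_A` whose internal nodes are contained in
`in(T) ∩ (A ∪ {x})`. -/
theorem transform_to_A_tree
    {V : Type*} [Fintype V] [Nonempty V] (G : SimpleGraph V)
    (T : SimpleGraph (V ⊕ (V × Bool) ⊕ Bool))
    (hT : IsSpanningTree (Gprime G) T) :
    ∃ TA : SimpleGraph (V ⊕ (V × Bool) ⊕ Bool),
      IsSpanningTree (Gprime G) TA ∧
      internalNodes TA ⊆ internalNodes T ∩
        (Set.range Sum.inl ∪ {Sum.inr (Sum.inr false)}) ∧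
      Transformable (Gprime G) (fun S => internalNodes S ⊆ internalNodes T) T TA :=
  hT.exists_transformable subset_rfl
end
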